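/- arXiv:2007.14574 — 2 statements merged into one kernel-verified Lean document; each statement's English description precedes it below -/
import Mathlib

section
/- User welfare on the segment between CP_j and CP_{j+1}, given by W(d_j, d_{j+1}) = (1-θ)·[(1/(M-1))(V - (d_j + d_{j+1})/2 - t/(2(M-1))) + (d_{j+1} - d_j)²/(4t)] + (θ t/2)(τ_j(d_j)² + τ_{j+1}(d_{j+1})²), is strictly decreasing in d_j and strictly decreasing in d_{j+1} on (0, d_0], provided θ ∈ (0,1), τ_j(d), τ_{j+1}(d) > 0, and (d_0 related bound) |d_{j+1} - d_j| < t/(M-1). -/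
open Set

lemma welfare_key (A t θ V s x x' y : ℝ) (hA : 0 < A) (ht : 0 < t) (hθ : 0 < θ) (hθ1 : θ < 1)
    (hx : x < x') (hu : 0 < V - x - s) (hu' : 0 < V - x' - s)
    (hb1 : -t < A * (y - x)) (hb2 : -t < A * (y - x')) :
    (1 - θ) * (-(2 * t * (x' - x)) + A * ((y - x')^2 - (y - x)^2))
      + 2 * A * θ * ((V - x' - s)^2 - (V - x - s)^2) < 0 := by
  nlinarith [mul_pos (sub_pos.2 hθ1) (sub_pos.2 hx),
    mul_pos hθ (sub_pos.2 hx), mul_pos (mul_pos hθ (sub_pos.2 hx)) hA,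
    mul_pos (mul_pos hA hθ) (mul_pos (sub_pos.2 hx) (add_pos hu hu')),
    mul_pos (mul_pos (sub_pos.2 hθ1) (sub_pos.2 hx)) (by linarith : (0:ℝ) < A * (y - x) + t),
    mul_pos (mul_pos (sub_pos.2 hθ1) (sub_pos.2 hx)) (by linarith : (0:ℝ) < A * (y - x') + t)]

/-- Segment welfare
W(d_j, d_{j+1}) = (1-θ)[(1/(M-1))(V - (d_j+d_{j+1})/2 - t/(2(M-1))) + (d_{j+1}-d_j)²/(4t)]
                  + (θt/2)(τ_j(d_j)² + τ_{j+1}(d_{j+1})²)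
is strictly decreasing in each delay on (0, d₀], provided θ ∈ (0,1), the τ's are
positive, and the delay gap is below t/(M-1). -/
theorem welfare_decreasing_in_delays (M : ℕ) (hM : 3 ≤ M) (V t θ d₀ Sj Sk : ℝ)
    (ht : 0 < t) (hθ : 0 < θ) (hθ1 : θ < 1) (hd₀ : 0 < d₀)
    (hτj : ∀ d ∈ Ioc (0 : ℝ) d₀, 0 < (V - d - Sj / θ) / t)
    (hτk : ∀ d ∈ Ioc (0 : ℝ) d₀, 0 < (V - d - Sk / θ) / t) :
    let τj : ℝ → ℝ := fun d => (V - d - Sj / θ) / t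
    let τk : ℝ → ℝ := fun d => (V - d - Sk / θ) / t
    let W : ℝ → ℝ → ℝ := fun dj dk =>
      (1 - θ) * ((1 / ((M : ℝ) - 1)) * (V - (dj + dk) / 2 - t / (2 * ((M : ℝ) - 1)))
        + (dk - dj) ^ 2 / (4 * t)) + (θ * t / 2) * (τj dj ^ 2 + τk dk ^ 2)
    (∀ dj dj' dk, dj ∈ Ioc (0 : ℝ) d₀ → dj' ∈ Ioc (0 : ℝ) d₀ → dk ∈ Ioc (0 : ℝ) d₀ →
      dj < dj' → |dk - dj| < t / ((M : ℝ) - 1) → |dk - dj'| < t / ((M : ℝ) - 1) →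
      W dj' dk < W dj dk) ∧
    (∀ dj dk dk', dj ∈ Ioc (0 : ℝ) d₀ → dk ∈ Ioc (0 : ℝ) d₀ → dk' ∈ Ioc (0 : ℝ) d₀ →
      dk < dk' → |dk - dj| < t / ((M : ℝ) - 1) → |dk' - dj| < t / ((M : ℝ) - 1) →
      W dj dk' < W dj dk) := by
  intro τj τk W
  have hA : (0:ℝ) < (M : ℝ) - 1 := by
    have : (3:ℝ) ≤ (M : ℝ) := by exact_mod_cast hM
    linarith
  set A : ℝ := (M : ℝ) - 1 with hAdef
  have hAne : A ≠ 0 := ne_of_gt hA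
  have htne : t ≠ 0 := ne_of_gt ht
  have hpos : ∀ d ∈ Ioc (0:ℝ) d₀, 0 < V - d - Sj / θ := by
    intro d hd
    have h := mul_pos (hτj d hd) ht
    rwa [div_mul_cancel₀ _ htne] at h
  have hposk : ∀ d ∈ Ioc (0:ℝ) d₀, 0 < V - d - Sk / θ := by
    intro d hd
    have h := mul_pos (hτk d hd) ht
    rwa [div_mul_cancel₀ _ htne] at h
  constructor
  · intro dj dj' dk hdj hdj' hdk hlt h1 h2
    rw [abs_lt] at h1 h2
    have hb1 : -t < A * (dk - dj) := by
      have h := mul_lt_mul_of_pos_left h1.1 hA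
      rw [mul_neg, mul_div_cancel₀ _ hAne] at h
      linarith
    have hb2 : -t < A * (dk - dj') := by
      have h := mul_lt_mul_of_pos_left h2.1 hA
      rw [mul_neg, mul_div_cancel₀ _ hAne] at h
      linarith
    have key := welfare_key A t θ V (Sj / θ) dj dj' dk hA ht hθ hθ1 hlt
      (hpos dj hdj) (hpos dj' hdj') hb1 hb2
    rw [← sub_pos]
    have e : W dj dk - W dj' dk =
        (-((1 - θ) * (-(2 * t * (dj' - dj)) + A * ((dk - dj')^2 - (dk - dj)^2))
          + 2 * A * θ * ((V - dj' - Sj / θ)^2 - (V - dj - Sj / θ)^2))) / (4 * t * A) := by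
      simp only [W, τj, τk]
      rw [← hAdef]
      field_simp
      ring
    rw [e]
    apply div_pos (by linarith) (by positivity)
  · intro dj dk dk' hdj hdk hdk' hlt h1 h2
    rw [abs_lt] at h1 h2
    have hb1 : -t < A * (dj - dk) := by
      have h := mul_lt_mul_of_pos_left h1.2 hA
      rw [mul_div_cancel₀ _ hAne] at h
      nlinarith
    have hb2 : -t < A * (dj - dk') := by
      have h := mul_lt_mul_of_pos_left h2.2 hA
      rw [mul_div_cancel₀ _ hAne] at h
      nlinarith
    have key := welfare_key A t θ V (Sk / θ) dk dk' dj hA ht hθ hθ1 hlt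
      (hposk dk hdk) (hposk dk' hdk') hb1 hb2
    rw [← sub_pos]
    have e : W dj dk - W dj dk' =
        (-((1 - θ) * (-(2 * t * (dk' - dk)) + A * ((dj - dk')^2 - (dj - dk)^2))
          + 2 * A * θ * ((V - dk' - Sk / θ)^2 - (V - dk - Sk / θ)^2))) / (4 * t * A) := by
      simp only [W, τj, τk]
      rw [← hAdef]
      field_simp
      ring
    rw [e]
    apply div_pos (by linarith) (by positivity)
end

section
/- If CP_j is prioritized to d_j* < d_0 while CP_{j+1} keeps delay d_0, then user welfare on the segment between CP_j and CP_{j+1} strictly increases: W(d_j*, d_0) > W(d_0, d_0). -/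
/-- If CP_j is prioritized to d_j* < d₀ while CP_{j+1} keeps d₀, segment welfare
strictly increases: W(d_j*, d₀) > W(d₀, d₀). -/
theorem welfare_increases_under_prioritization (M : ℕ) (hM : 3 ≤ M)
    (V t θ d₀ dstar Sj Sk : ℝ)
    (ht : 0 < t) (hθ : 0 < θ) (hθ1 : θ < 1)
    (hd : dstar < d₀) (hdpos : 0 < dstar)
    (hτj : 0 < (V - d₀ - Sj / θ) / t) :
    let τj : ℝ → ℝ := fun d => (V - d - Sj / θ) / t
    let τk : ℝ → ℝ := fun d => (V - d - Sk / θ) / t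
    let W : ℝ → ℝ → ℝ := fun dj dk =>
      (1 - θ) * ((1 / ((M : ℝ) - 1)) * (V - (dj + dk) / 2 - t / (2 * ((M : ℝ) - 1)))
        + (dk - dj) ^ 2 / (4 * t)) + (θ * t / 2) * (τj dj ^ 2 + τk dk ^ 2)
    W d₀ d₀ < W dstar d₀ := by
  intro τj τk W
  simp only [W, τj, τk]
  have h1 : (0:ℝ) < (M:ℝ) - 1 := by
    have : (3:ℝ) ≤ (M:ℝ) := by exact_mod_cast hM
    linarith
  have hab : (V - d₀ - Sj / θ) / t < (V - dstar - Sj / θ) / t := by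
    rw [div_lt_div_iff₀ ht ht]; nlinarith
  have hb2 : ((V - d₀ - Sj / θ) / t) ^ 2 < ((V - dstar - Sj / θ) / t) ^ 2 := by nlinarith
  apply add_lt_add
  · apply mul_lt_mul_of_pos_left _ (by linarith : (0:ℝ) < 1 - θ)
    have hq : (0:ℝ) ≤ (d₀ - dstar) ^ 2 / (4 * t) := by positivity
    have hc : 1 / ((M:ℝ)-1) * (V - (d₀ + d₀) / 2 - t / (2 * ((M:ℝ) - 1)))
        < 1 / ((M:ℝ)-1) * (V - (dstar + d₀) / 2 - t / (2 * ((M:ℝ) - 1))) := by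
      apply mul_lt_mul_of_pos_left _ (by positivity)
      linarith
    have hz : (d₀ - d₀) ^ 2 / (4 * t) = 0 := by ring
    linarith
  · apply mul_lt_mul_of_pos_left _ (by positivity)
    linarith
end
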